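/- Let m be a basic probability assignment on a finite nonempty set Θ with plausibility function Pl. Then the set T^{n−1}[Bel] = {p' : Θ → ℝ : ∑_{x∈Θ} p'(x) = 1 and p'(x) ≤ Pl(x) for all x ∈ Θ} equals the convex hull in the real vector space ℝ^Θ of the finite set of points {t^{n−1}_x : x ∈ Θ}, where t^{n−1}_x(x) = Pl(x) + 1 − k_Pl and t^{n−1}_x(y) = Pl(y) for y ≠ x. -/

import Mathlib

/-!
Writing `u = Pl(·)` on singletons and `c = k_Pl - 1`, the map `q ↦ u - c • q` sends the standard
simplex onto the set of probability vectors bounded above by `u`: its inverse is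
`p ↦ c⁻¹ • (u - p)`, and when `c = 0` both sides reduce to `{u}`. Since the map is affine, it
carries the convex hull of the basis vectors to that of the `t_x = u - c • eₓ`. That `c ≥ 0`
holds because `k_Pl = ∑_B |B| m(B) ≥ ∑_B m(B) = 1`.
-/

open Finset

/-- A basic probability assignment on a finite set `Θ`. -/
def IsBPA {Θ : Type*} [Fintype Θ] (m : Finset Θ → ℝ) : Prop :=
  m ∅ = 0 ∧ (∀ A, 0 ≤ m A) ∧ (∑ A : Finset Θ, m A) = 1

/-- Belief function `Bel(A) = ∑_{B ⊆ A} m(B)`. -/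
noncomputable def Bel {Θ : Type*} [Fintype Θ] [DecidableEq Θ] (m : Finset Θ → ℝ)
    (A : Finset Θ) : ℝ :=
  ∑ B ∈ A.powerset, m B

/-- Plausibility function `Pl(A) = ∑_{B ∩ A ≠ ∅} m(B)`. -/
noncomputable def Pl {Θ : Type*} [Fintype Θ] [DecidableEq Θ] (m : Finset Θ → ℝ)
    (A : Finset Θ) : ℝ :=
  ∑ B ∈ Finset.univ.filter (fun B => B ∩ A ≠ ∅), m B

/-- Total mass of singletons `k_Bel`. -/
noncomputable def kBel {Θ : Type*} [Fintype Θ] (m : Finset Θ → ℝ) : ℝ :=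
  ∑ x : Θ, m {x}

/-- Total plausibility of singletons `k_Pl`. -/
noncomputable def kPl {Θ : Type*} [Fintype Θ] [DecidableEq Θ] (m : Finset Θ → ℝ) : ℝ :=
  ∑ x : Θ, Pl m {x}

/-- `β[Bel] = (1 - k_Bel)/(k_Pl - k_Bel)`. -/
noncomputable def betaBel {Θ : Type*} [Fintype Θ] [DecidableEq Θ] (m : Finset Θ → ℝ) : ℝ :=
  (1 - kBel m) / (kPl m - kBel m)

/-- The intersection probability `p[Bel](x) = m(x) + β[Bel]⬝(Pl(x) - m(x))`. -/
noncomputable def pInt {Θ : Type*} [Fintype Θ] [DecidableEq Θ] (m : Finset Θ → ℝ)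
    (x : Θ) : ℝ :=
  m {x} + betaBel m * (Pl m {x} - m {x})

/-- Vertex `t^{n-1}_x` of the upper simplex: `t^{n-1}_x(x) = Pl(x) + 1 - k_Pl`,
`t^{n-1}_x(y) = Pl(y)` for `y ≠ x`. -/
noncomputable def upperVertex {Θ : Type*} [Fintype Θ] [DecidableEq Θ]
    (m : Finset Θ → ℝ) (x : Θ) : Θ → ℝ :=
  fun y => if y = x then Pl m {y} + 1 - kPl m else Pl m {y}

section UpperSimplex

variable {ι : Type*} [Fintype ι] (u : ι → ℝ)

theorem setOf_sum_eq_one_and_le_eq_image_stdSimplex (hu : 1 ≤ ∑ i, u i) :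
    {p : ι → ℝ | ∑ i, p i = 1 ∧ ∀ i, p i ≤ u i} =
      (fun q => u - (∑ j, u j - 1) • q) '' stdSimplex ℝ ι := by
  set c := ∑ j, u j - 1 with hc
  have hc0 : 0 ≤ c := by linarith
  ext p
  constructor
  · rintro ⟨hsum, hle⟩
    have hgap_nonneg (i : ι) : 0 ≤ u i - p i := sub_nonneg.mpr (hle i)
    have hgap_sum : ∑ i, (u i - p i) = c := by rw [sum_sub_distrib, hsum]
    rcases hc0.eq_or_lt with hc0 | hcpos
    · classical
      obtain ⟨i, -⟩ := nonempty_of_sum_ne_zero (hsum ▸ one_ne_zero)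
      have hp : p = u := funext fun j => by
        have := (sum_eq_zero_iff_of_nonneg fun j _ => hgap_nonneg j).mp
          (hgap_sum.trans hc0.symm) j (mem_univ j)
        linarith
      exact ⟨Pi.single i 1, single_mem_stdSimplex ℝ i, by
        dsimp only; rw [← hc0, zero_smul, sub_zero, hp]⟩
    · refine ⟨c⁻¹ • (u - p), ⟨fun i => ?_, ?_⟩, ?_⟩
      · exact mul_nonneg (inv_nonneg.mpr hc0) (hgap_nonneg i)
      · simp only [Pi.smul_apply, Pi.sub_apply, smul_eq_mul, ← mul_sum, hgap_sum,
          inv_mul_cancel₀ hcpos.ne']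
      · dsimp only; rw [smul_inv_smul₀ hcpos.ne', sub_sub_cancel]
  · rintro ⟨q, ⟨hq0, hq1⟩, rfl⟩
    refine ⟨?_, fun i => ?_⟩
    · simp [sum_sub_distrib, ← mul_sum, hq1, hc]
    · simpa using mul_nonneg hc0 (hq0 i)

theorem setOf_sum_eq_one_and_le_eq_convexHull [DecidableEq ι] (hu : 1 ≤ ∑ i, u i) :
    {p : ι → ℝ | ∑ i, p i = 1 ∧ ∀ i, p i ≤ u i} =
      convexHull ℝ (Set.range fun i => u - (∑ j, u j - 1) • Pi.single i 1) := by
  let f : (ι → ℝ) →ᵃ[ℝ] (ι → ℝ) :=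
    AffineMap.const ℝ _ u - (∑ j, u j - 1) • LinearMap.id.toAffineMap
  have hrange : (Set.range fun i => u - (∑ j, u j - 1) • Pi.single i 1) =
      f '' Set.range fun i => Pi.single i 1 := by
    rw [← Set.range_comp]; rfl
  rw [hrange, ← f.image_convexHull, convexHull_rangle_single_eq_stdSimplex]
  exact setOf_sum_eq_one_and_le_eq_image_stdSimplex u hu

end UpperSimplex

section Plausibility

variable {Θ : Type*} [Fintype Θ] [DecidableEq Θ]

theorem kPl_eq_sum_card_mul (m : Finset Θ → ℝ) : kPl m = ∑ B, (#B : ℝ) * m B := by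
  have hmeets (B : Finset Θ) (x : Θ) : B ∩ {x} ≠ ∅ ↔ x ∈ B := by
    rw [Ne, ← disjoint_iff_inter_eq_empty, disjoint_singleton_right, not_not]
  simp only [kPl, Pl, sum_filter, hmeets]
  rw [sum_comm]
  refine sum_congr rfl fun B _ => ?_
  rw [sum_ite_mem, univ_inter, sum_const, nsmul_eq_mul]

theorem one_le_kPl {m : Finset Θ → ℝ} (hm : IsBPA m) : 1 ≤ kPl m := by
  obtain ⟨hm_empty, hm_nonneg, hm_sum⟩ := hm
  rw [kPl_eq_sum_card_mul, ← hm_sum]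
  refine sum_le_sum fun B _ => ?_
  rcases B.eq_empty_or_nonempty with rfl | hB
  · simp [hm_empty]
  · exact le_mul_of_one_le_left (hm_nonneg B) (by exact_mod_cast hB.card_pos)

theorem upperVertex_eq (m : Finset Θ → ℝ) (x : Θ) :
    upperVertex m x = (fun y => Pl m {y}) - (kPl m - 1) • Pi.single x 1 := by
  ext y
  by_cases hyx : y = x
  · subst hyx
    simp only [upperVertex, if_pos, Pi.sub_apply, Pi.smul_apply, Pi.single_eq_same, smul_eq_mul]
    ring
  · simp [upperVertex, hyx]

end Plausibility

theorem upperSimplex_eq_convexHull_general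
    {Θ : Type*} [Fintype Θ] [DecidableEq Θ]
    (m : Finset Θ → ℝ) (hm : IsBPA m) :
    {p' : Θ → ℝ | (∑ x : Θ, p' x) = 1 ∧ ∀ x : Θ, p' x ≤ Pl m {x}} =
      convexHull ℝ (Set.range (upperVertex m)) := by
  rw [funext (upperVertex_eq m)]
  exact setOf_sum_eq_one_and_le_eq_convexHull (fun y => Pl m {y}) (one_le_kPl hm)

/-- upper half of Theorem 2: the upper simplex
`T^{n-1}[Bel] = {p' : ∑ p' = 1, p'(x) ≤ Pl(x) ∀x}` is the convex hull of the
vertices `t^{n-1}_x`, `x ∈ Θ`. -/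
theorem upperSimplex_eq_convexHull
    {Θ : Type*} [Fintype Θ] [DecidableEq Θ] [Nonempty Θ]
    (m : Finset Θ → ℝ) (hm : IsBPA m) :
    {p' : Θ → ℝ | (∑ x : Θ, p' x) = 1 ∧ ∀ x : Θ, p' x ≤ Pl m {x}} =
      convexHull ℝ (Set.range (upperVertex m)) :=
  upperSimplex_eq_convexHull_general m hm
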